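/- arXiv:0810.2839 — 10 statements merged into one kernel-verified Lean document; each statement's English description precedes it below -/
import Mathlib

section
/- Let q be a prime power, F = GF(q), and g : F × F → F any function. Then the map (x,y) ↦ (ax − y, ay + g(x,y)) is a bijection of F × F for every a ∈ F if and only if the map x ↦ g(x, ax − b) + a²x is a bijection of F for every a, b ∈ F. -/
/-!
The first coordinate `a * x - y` of `(x, y) ↦ (a * x - y, a * y + g (x, y))` is constant exactly
on the lines `y = a * x - b`, so the map is injective iff its second coordinate is injective on
each such line. There it equals `g (x, a * x - b) + a ^ 2 * x - a * b`, and over a finite field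
injectivity is bijectivity.
-/

theorem injective_sub_prodMk_iff {R M : Type*} [CommRing R] (a : R) (h : R × R → M) :
    Function.Injective (fun p : R × R => (a * p.1 - p.2, h p)) ↔
      ∀ b : R, Function.Injective (fun x : R => h (x, a * x - b)) := by
  constructor
  · intro hinj b x x' hx
    have hline : ((x, a * x - b) : R × R) = (x', a * x' - b) :=
      hinj (Prod.ext (by ring) hx)
    exact congrArg Prod.fst hline
  · rintro hline ⟨x, y⟩ ⟨x', y'⟩ hp
    obtain ⟨hfst, hsnd⟩ := Prod.mk.inj hp
    have hy : y = a * x - (a * x - y) := by ring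
    have hy' : y' = a * x' - (a * x - y) := by linear_combination hfst
    have hx : x = x' := hline (a * x - y) (by simpa only [← hy, ← hy'] using hsnd)
    subst hx
    exact Prod.ext rfl (hy.trans hy'.symm)

/-- Spread criterion: for a finite field `F = GF(q)` and any function
`g : F × F → F`, the map `(x,y) ↦ (ax − y, ay + g(x,y))` is a bijection of
`F × F` for every `a` iff `x ↦ g(x, ax − b) + a²x` is a bijection of `F`
for all `a, b`. -/
theorem stmt_0 (F : Type*) [Field F] [Fintype F] (g : F × F → F) :
    (∀ a : F, Function.Bijective
      (fun p : F × F => (a * p.1 - p.2, a * p.2 + g p))) ↔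
    (∀ a b : F, Function.Bijective
      (fun x : F => g (x, a * x - b) + a ^ 2 * x)) := by
  simp only [← Finite.injective_iff_bijective, injective_sub_prodMk_iff]
  refine forall₂_congr fun a b => ?_
  have hshift : (fun x : F => a * (a * x - b) + g (x, a * x - b)) =
      (· + -(a * b)) ∘ fun x => g (x, a * x - b) + a ^ 2 * x := by
    funext x
    simp only [Function.comp_apply]
    ring
  rw [hshift, (add_left_injective _).of_comp_iff]
end

section
/- Let q be a prime power, F = GF(q), V = F⁴, and g : F × F → F any function. Consider the family of 2-dimensional subspaces of V consisting of ℓ∞ = span{(0,0,0,1),(0,0,1,0)} together with ℓ_{x,y} = span{(0,1,x,y),(1,0,−y,g(x,y))} for each (x,y) ∈ F². Then every nonzero vector of V lies in exactly one subspace of this family (i.e. the family is a spread of PG(3,q)) if and only if the map x ↦ g(x, ax − b) + a²x is a bijection of F for every a, b ∈ F. -/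
/-!
A point `(0, 0, z, w)` lies only on `ℓ∞`, and a point `(0, 1, x, y)` only on `ℓ_{x,y}`,
whatever `g` is.
A point `(1, a, b, c)` lies on `ℓ_{x,y}` iff `y = a x - b` and `g(x, a x - b) + a² x = c + a b`,
so, after scaling, the points with nonzero first coordinate are covered exactly once iff each
`x ↦ g(x, a x - b) + a² x` takes every value exactly once.
-/

open Submodule

namespace GraphSpread

variable {F : Type*} [Field F]

def lineInf : Submodule F (Fin 4 → F) :=
  span F {![0, 0, 0, 1], ![0, 0, 1, 0]}

def line (g : F × F → F) (x y : F) : Submodule F (Fin 4 → F) :=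
  span F {![0, 1, x, y], ![1, 0, -y, g (x, y)]}

def spreadFamily (g : F × F → F) : Set (Submodule F (Fin 4 → F)) :=
  insert lineInf {L | ∃ x y, L = line g x y}

lemma mem_lineInf_iff (v : Fin 4 → F) : v ∈ lineInf ↔ v 0 = 0 ∧ v 1 = 0 := by
  rw [lineInf, mem_span_pair]
  constructor
  · rintro ⟨s, t, rfl⟩
    simp
  · rintro ⟨h0, h1⟩
    refine ⟨v 3, v 2, funext fun i => ?_⟩
    fin_cases i <;> simp [h0, h1]

lemma mem_line_iff (g : F × F → F) (x y : F) (v : Fin 4 → F) :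
    v ∈ line g x y ↔ v 2 = v 1 * x - v 0 * y ∧ v 3 = v 1 * y + v 0 * g (x, y) := by
  rw [line, mem_span_pair]
  constructor
  · rintro ⟨s, t, rfl⟩
    simp only [Pi.add_apply, Pi.smul_apply, smul_eq_mul, Matrix.cons_val]
    constructor <;> ring
  · rintro ⟨h2, h3⟩
    refine ⟨v 1, v 0, funext fun i => ?_⟩
    fin_cases i <;> simp [h2, h3, sub_eq_add_neg]

lemma vec_zero_one_mem_line_iff (g : F × F → F) (x y x' y' : F) :
    ![0, 1, x, y] ∈ line g x' y' ↔ x = x' ∧ y = y' := by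
  simp [mem_line_iff]

lemma vec_zero_one_mem_line (g : F × F → F) (x y : F) : ![0, 1, x, y] ∈ line g x y :=
  (vec_zero_one_mem_line_iff g x y x y).2 ⟨rfl, rfl⟩

lemma line_injective (g : F × F → F) : Function.Injective2 (line g) := fun x x' y y' h =>
  (vec_zero_one_mem_line_iff g x y x' y').1 (h ▸ vec_zero_one_mem_line g x y)

lemma vec_one_mem_line_iff (g : F × F → F) (a b c x y : F) :
    ![1, a, b, c] ∈ line g x y ↔
      y = a * x - b ∧ g (x, a * x - b) + a ^ 2 * x = c + a * b := by
  simp only [mem_line_iff, Matrix.cons_val, one_mul]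
  constructor
  · rintro ⟨hb, hc⟩
    obtain rfl : y = a * x - b := by linear_combination hb
    exact ⟨rfl, by linear_combination -hc⟩
  · rintro ⟨rfl, hc⟩
    exact ⟨by ring, by linear_combination -hc⟩

lemma existsUnique_smul_mem_iff {K V : Type*} [DivisionRing K] [AddCommGroup V] [Module K V]
    (S : Set (Submodule K V)) {c : K} (hc : c ≠ 0) (v : V) :
    (∃! L, L ∈ S ∧ c • v ∈ L) ↔ ∃! L, L ∈ S ∧ v ∈ L := by
  simp only [smul_mem_iff _ hc]

lemma existsUnique_mem_spreadFamily_of_mem_lineInf (g : F × F → F) {v : Fin 4 → F}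
    (hv : v ≠ 0) (hv_inf : v ∈ lineInf) :
    ∃! L, L ∈ spreadFamily g ∧ v ∈ L := by
  refine ⟨lineInf, ⟨Set.mem_insert _ _, hv_inf⟩, ?_⟩
  rintro L ⟨hL | ⟨x, y, rfl⟩, hvL⟩
  · exact hL
  · obtain ⟨h0, h1⟩ := (mem_lineInf_iff v).1 hv_inf
    obtain ⟨h2, h3⟩ := (mem_line_iff g x y v).1 hvL
    refine absurd (funext fun i => ?_) hv
    fin_cases i <;> simp_all

lemma existsUnique_vec_zero_one_mem_spreadFamily (g : F × F → F) (x y : F) :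
    ∃! L, L ∈ spreadFamily g ∧ ![0, 1, x, y] ∈ L := by
  refine ⟨line g x y, ⟨Or.inr ⟨x, y, rfl⟩, vec_zero_one_mem_line g x y⟩, ?_⟩
  rintro L ⟨rfl | ⟨x', y', rfl⟩, hvL⟩
  · simp [mem_lineInf_iff] at hvL
  · obtain ⟨rfl, rfl⟩ := (vec_zero_one_mem_line_iff g x y x' y').1 hvL
    rfl

lemma existsUnique_vec_one_mem_spreadFamily_iff (g : F × F → F) (a b c : F) :
    (∃! L, L ∈ spreadFamily g ∧ ![1, a, b, c] ∈ L) ↔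
      ∃! x, g (x, a * x - b) + a ^ 2 * x = c + a * b := by
  have not_mem_lineInf : ![1, a, b, c] ∉ lineInf := by simp [mem_lineInf_iff]
  constructor
  · rintro ⟨L, ⟨rfl | ⟨x, y, rfl⟩, hvL⟩, huniq⟩
    · exact absurd hvL not_mem_lineInf
    obtain ⟨rfl, hx⟩ := (vec_one_mem_line_iff g a b c x y).1 hvL
    refine ⟨x, hx, fun x' hx' => ?_⟩
    have hL : line g x' (a * x' - b) = line g x (a * x - b) :=
      huniq _ ⟨Or.inr ⟨_, _, rfl⟩, (vec_one_mem_line_iff g a b c _ _).2 ⟨rfl, hx'⟩⟩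
    exact (line_injective g hL).1
  · rintro ⟨x, hx, huniq⟩
    refine ⟨line g x (a * x - b),
      ⟨Or.inr ⟨_, _, rfl⟩, (vec_one_mem_line_iff g a b c _ _).2 ⟨rfl, hx⟩⟩, ?_⟩
    rintro L ⟨rfl | ⟨x', y', rfl⟩, hvL⟩
    · exact absurd hvL not_mem_lineInf
    obtain ⟨rfl, hx'⟩ := (vec_one_mem_line_iff g a b c x' y').1 hvL
    rw [huniq x' hx']

lemma existsUnique_mem_spreadFamily (g : F × F → F)
    (hbij : ∀ a b : F, Function.Bijective fun x => g (x, a * x - b) + a ^ 2 * x)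
    {v : Fin 4 → F} (hv : v ≠ 0) :
    ∃! L, L ∈ spreadFamily g ∧ v ∈ L := by
  by_cases h0 : v 0 = 0
  · by_cases h1 : v 1 = 0
    · exact existsUnique_mem_spreadFamily_of_mem_lineInf g hv ((mem_lineInf_iff v).2 ⟨h0, h1⟩)
    have hnorm : (v 1)⁻¹ • v = ![0, 1, v 2 / v 1, v 3 / v 1] := by
      funext i
      fin_cases i <;> simp [h0, h1, div_eq_inv_mul]
    rw [← existsUnique_smul_mem_iff _ (inv_ne_zero h1), hnorm]
    exact existsUnique_vec_zero_one_mem_spreadFamily g _ _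
  · have hnorm : (v 0)⁻¹ • v = ![1, v 1 / v 0, v 2 / v 0, v 3 / v 0] := by
      funext i
      fin_cases i <;> simp [h0, div_eq_inv_mul]
    rw [← existsUnique_smul_mem_iff _ (inv_ne_zero h0), hnorm,
      existsUnique_vec_one_mem_spreadFamily_iff]
    exact (hbij _ _).existsUnique _

end GraphSpread

theorem stmt_1_general (F : Type*) [Field F] (g : F × F → F)
    (linf : Submodule F (Fin 4 → F))
    (hinf : linf = Submodule.span F {![0,0,0,1], ![0,0,1,0]})
    (l : F → F → Submodule F (Fin 4 → F))
    (hl : ∀ x y : F, l x y =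
      Submodule.span F {![0,1,x,y], ![1,0,-y, g (x, y)]})
    (S : Set (Submodule F (Fin 4 → F)))
    (hS : S = insert linf {L | ∃ x y : F, L = l x y}) :
    (∀ v : Fin 4 → F, v ≠ 0 → ∃! L : Submodule F (Fin 4 → F), L ∈ S ∧ v ∈ L) ↔
    (∀ a b : F, Function.Bijective
      (fun x : F => g (x, a * x - b) + a ^ 2 * x)) := by
  obtain rfl : l = GraphSpread.line g := funext₂ hl
  obtain rfl : S = GraphSpread.spreadFamily g := by rw [hS, hinf]; rfl
  refine ⟨fun hspread a b => ?_,
    fun hbij v hv => GraphSpread.existsUnique_mem_spreadFamily g hbij hv⟩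
  refine (Function.bijective_iff_existsUnique _).2 fun c => ?_
  have hv : ![1, a, b, c - a * b] ≠ 0 := fun h => by simpa using congr_fun h 0
  simpa using
    (GraphSpread.existsUnique_vec_one_mem_spreadFamily_iff g a b (c - a * b)).1 (hspread _ hv)

/-- Theorem 1 of the paper: the family of totally isotropic lines
`ℓ∞ ∪ { ℓ_{x,y} : x,y ∈ F }` is a spread of `PG(3,q)` (every nonzero vector of
`F⁴` lies in exactly one member) iff `x ↦ g(x, ax − b) + a²x` is a bijection
of `F` for all `a, b ∈ F`. -/
theorem stmt_1 (F : Type*) [Field F] [Fintype F] (g : F × F → F)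
    (linf : Submodule F (Fin 4 → F))
    (hinf : linf = Submodule.span F {![0,0,0,1], ![0,0,1,0]})
    (l : F → F → Submodule F (Fin 4 → F))
    (hl : ∀ x y : F, l x y =
      Submodule.span F {![0,1,x,y], ![1,0,-y, g (x, y)]})
    (S : Set (Submodule F (Fin 4 → F)))
    (hS : S = insert linf {L | ∃ x y : F, L = l x y}) :
    (∀ v : Fin 4 → F, v ≠ 0 → ∃! L : Submodule F (Fin 4 → F), L ∈ S ∧ v ∈ L) ↔
    (∀ a b : F, Function.Bijective
      (fun x : F => g (x, a * x - b) + a ^ 2 * x)) :=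
  stmt_1_general F g linf hinf l hl S hS
end

section
/- Let q be a prime power, F = GF(q), and g : F × F → F any function. Then the map (x,y) ↦ (ax − y, ay + g(x,y)) is a bijection of F × F for every a ∈ F if and only if for all pairs (x,y) ≠ (u,v) in F × F one has (y − v)² + (x − u)(g(x,y) − g(u,v)) ≠ 0. -/
/-!
Two points `(x, y) ≠ (u, v)` collide under the map for the slope `a` exactly when
`a (x - u) = y - v` and `a (y - v) + g(x, y) - g(u, v) = 0`. Eliminating `a` gives the quadratic
condition; conversely a zero of it forces `x ≠ u` and the slope `a = (y - v) / (x - u)` produces a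
collision.
-/

theorem exists_slope_collision_iff {K : Type*} [Field K] {x y u v : K} (c d : K)
    (hne : (x, y) ≠ (u, v)) :
    (∃ a : K, a * x - y = a * u - v ∧ a * y + c = a * v + d) ↔
      (y - v) ^ 2 + (x - u) * (c - d) = 0 := by
  constructor
  · rintro ⟨a, h1, h2⟩
    linear_combination (v - y) * h1 + (x - u) * h2
  · intro hzero
    have hxu : x - u ≠ 0 := by
      intro hxu
      have hyv : y - v = 0 := by simpa [hxu] using hzero
      exact hne (Prod.ext (sub_eq_zero.1 hxu) (sub_eq_zero.1 hyv))
    refine ⟨(y - v) / (x - u), ?_, ?_⟩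
    · field_simp
      ring
    · field_simp
      linear_combination hzero

/-- For a finite field `F = GF(q)` and any `g : F × F → F`, the map
`(x,y) ↦ (ax − y, ay + g(x,y))` is a bijection of `F × F` for every `a ∈ F`
iff `(y − v)² + (x − u)(g(x,y) − g(u,v)) ≠ 0` for all `(x,y) ≠ (u,v)`. -/
theorem stmt_2 (F : Type*) [Field F] [Fintype F] (g : F × F → F) :
    (∀ a : F, Function.Bijective
      (fun p : F × F => (a * p.1 - p.2, a * p.2 + g p))) ↔
    (∀ x y u v : F, (x, y) ≠ (u, v) →
      (y - v) ^ 2 + (x - u) * (g (x, y) - g (u, v)) ≠ 0) := by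
  simp only [← Finite.injective_iff_bijective]
  constructor
  · intro hinj x y u v hne hzero
    obtain ⟨a, h1, h2⟩ := (exists_slope_collision_iff _ _ hne).2 hzero
    exact hne (hinj a (Prod.ext h1 h2))
  · rintro h a ⟨x, y⟩ ⟨u, v⟩ hcoll
    by_contra hne
    obtain ⟨h1, h2⟩ := Prod.ext_iff.1 hcoll
    exact h x y u v hne ((exists_slope_collision_iff _ _ hne).1 ⟨a, h1, h2⟩)
end

section
/- Let q be a prime power, F = GF(q), h₁ : F → F any function, and h₂ : F → F an additive function (h₂(x+u) = h₂(x) + h₂(u) for all x,u ∈ F). Set g(x,y) = h₁(x) + h₂(y). Then the map (x,y) ↦ (ax − y, ay + g(x,y)) is a bijection of F × F for every a ∈ F if and only if the map x ↦ h₁(x) + h₂(ax) + a²x is a bijection of F for every a ∈ F. -/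
/-!
Substituting `y = a x - s` turns `T_a (x, y) = (a x - y, a y + h₁ x + h₂ y)` into
`(s, f_a x - a s - h₂ s)` with `f_a x = h₁ x + h₂ (a x) + a² x`, because `h₂` is additive.
Both the substitution and `(u, s) ↦ (s, u - a s - h₂ s)` are bijections, so `T_a` is
bijective exactly when `(x, s) ↦ (f_a x, s)` is, i.e. when `f_a` is.
-/

open Function

theorem bijective_prodMk_snd_add {α β : Type*} [AddGroup α] (k : β → α) :
    Bijective (fun p : α × β => (p.2, p.1 + k p.2)) :=
  (Equiv.mk (fun p : α × β => (p.2, p.1 + k p.2)) (fun q => (q.2 - k q.1, q.1))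
    (fun _ => by simp) (fun _ => by simp)).bijective

theorem involutive_prodMk_fst_sub {α β : Type*} [AddCommGroup β] (k : α → β) :
    Involutive (fun p : α × β => (p.1, k p.1 - p.2)) :=
  fun _ => by simp

section SpreadMap

variable {R : Type*} [Ring R]

theorem spreadMap_comp_shear (a : R) (h₁ : R → R) (h₂ : R →+ R) :
    (fun p : R × R => (a * p.1 - p.2, a * p.2 + (h₁ p.1 + h₂ p.2))) ∘
        (fun p : R × R => (p.1, a * p.1 - p.2)) =
      (fun p : R × R => (p.2, p.1 + (-(a * p.2) - h₂ p.2))) ∘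
        Prod.map (fun x => h₁ x + h₂ (a * x) + a ^ 2 * x) id := by
  ext ⟨x, s⟩ <;> simp only [comp_apply, Prod.map_apply, id_eq, map_sub] <;> noncomm_ring

theorem bijective_spreadMap_iff (a : R) (h₁ : R → R) (h₂ : R →+ R) :
    Bijective (fun p : R × R => (a * p.1 - p.2, a * p.2 + (h₁ p.1 + h₂ p.2))) ↔
      Bijective (fun x => h₁ x + h₂ (a * x) + a ^ 2 * x) := by
  rw [← Bijective.of_comp_iff _ (involutive_prodMk_fst_sub (a * ·)).bijective,
    spreadMap_comp_shear,
    Bijective.of_comp_iff' (bijective_prodMk_snd_add fun s => -(a * s) - h₂ s),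
    Prod.map_bijective]
  exact and_iff_left bijective_id

end SpreadMap

theorem stmt_3_general (F : Type*) [Field F] (h₁ h₂ : F → F)
    (hadd : ∀ x u : F, h₂ (x + u) = h₂ x + h₂ u) :
    (∀ a : F, Function.Bijective
      (fun p : F × F => (a * p.1 - p.2, a * p.2 + (h₁ p.1 + h₂ p.2)))) ↔
    (∀ a : F, Function.Bijective
      (fun x : F => h₁ x + h₂ (a * x) + a ^ 2 * x)) :=
  forall_congr' fun a => bijective_spreadMap_iff a h₁ (AddMonoidHom.mk' h₂ hadd)

/-- For `g(x,y) = h₁(x) + h₂(y)` with `h₂` additive, the spread condition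
(the map `(x,y) ↦ (ax − y, ay + g(x,y))` being a bijection of `F × F` for all
`a`) holds iff `x ↦ h₁(x) + h₂(ax) + a²x` is a bijection of `F` for all `a`. -/
theorem stmt_3 (F : Type*) [Field F] [Fintype F] (h₁ h₂ : F → F)
    (hadd : ∀ x u : F, h₂ (x + u) = h₂ x + h₂ u) :
    (∀ a : F, Function.Bijective
      (fun p : F × F => (a * p.1 - p.2, a * p.2 + (h₁ p.1 + h₂ p.2)))) ↔
    (∀ a : F, Function.Bijective
      (fun x : F => h₁ x + h₂ (a * x) + a ^ 2 * x)) :=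
  stmt_3_general F h₁ h₂ hadd
end

section
/- Let h ≥ 0, q = 3^(2h+1), α = 3^(h+1), and F = GF(q). For a ∈ F define f_a(x) = x^(2α+3) + (ax)^α − a²x. If f_a is a bijection of F for some a ∈ F, then f_{aζ²} is a bijection of F for every ζ ∈ F \ {0}. -/
/-! With `α = 3^(h+1)` we have `α² = 3q`, so `c^(α²) = c³` for every `c ∈ F`. Under this
relation the substitution `x ↦ c x` turns `f_{a c^(α+1)}` into `c^(2α+3) f_a`, and every nonzero
square `ζ²` is of the form `c^(α+1)`, namely for `c = ζ^(α-1)`. Hence `f_{aζ²}` is `f_a`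
composed with two nonzero scalings. -/

def permCandidate {R : Type*} [CommRing R] (α : ℕ) (a x : R) : R :=
  x ^ (2 * α + 3) + (a * x) ^ α - a ^ 2 * x

theorem permCandidate_mul_pow_succ {R : Type*} [CommRing R] {α : ℕ} {c : R}
    (hc : c ^ (α * α) = c ^ 3) (a x : R) :
    permCandidate α (a * c ^ (α + 1)) (c * x) = c ^ (2 * α + 3) * permCandidate α a x := by
  have hmid : (a * c ^ (α + 1) * (c * x)) ^ α = c ^ (2 * α + 3) * (a * x) ^ α :=
    calc (a * c ^ (α + 1) * (c * x)) ^ α = c ^ (α * α) * c ^ (2 * α) * (a * x) ^ α := by ring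
      _ = c ^ (2 * α + 3) * (a * x) ^ α := by rw [hc]; ring
  rw [permCandidate, permCandidate, hmid]
  ring

theorem pow_pred_pow_succ_eq_sq {G₀ : Type*} [GroupWithZero G₀] {α : ℕ} (hα : 0 < α) {ζ : G₀}
    (hζ : ζ ≠ 0) (h : ζ ^ (α * α) = ζ ^ 3) : (ζ ^ (α - 1)) ^ (α + 1) = ζ ^ 2 := by
  refine mul_right_cancel₀ hζ ?_
  rw [← pow_mul, ← pow_succ, ← pow_succ,
    show (α - 1) * (α + 1) + 1 = α * α by
      obtain ⟨n, rfl⟩ := Nat.exists_eq_add_of_lt hα; simp only [Nat.add_sub_cancel]; ring, h]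

theorem FiniteField.pow_mul_card {K : Type*} [GroupWithZero K] [Fintype K] (n : ℕ) (y : K) :
    y ^ (n * Fintype.card K) = y ^ n := by
  rw [mul_comm, pow_mul, FiniteField.pow_card]

/-- With `q = 3^(2h+1)`, `α = 3^(h+1)` and `f_a(x) = x^(2α+3) + (ax)^α − a²x`:
if `f_a` is a bijection of `F` for some `a`, then so is `f_{aζ²}` for every
nonzero `ζ`. -/
theorem stmt_7 (h : ℕ) (F : Type*) [Field F] [Fintype F]
    (hq : Fintype.card F = 3 ^ (2 * h + 1))
    (f : F → F → F)
    (hf : ∀ a x : F, f a x =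
      x ^ (2 * 3 ^ (h + 1) + 3) + (a * x) ^ (3 ^ (h + 1)) - a ^ 2 * x)
    (a : F) (ha : Function.Bijective (f a)) :
    ∀ ζ : F, ζ ≠ 0 → Function.Bijective (f (a * ζ ^ 2)) := by
  intro ζ hζ
  have hf' : f = permCandidate (3 ^ (h + 1)) := by
    funext b x
    exact hf b x
  have hfrob (y : F) : y ^ (3 ^ (h + 1) * 3 ^ (h + 1)) = y ^ 3 := by
    rw [← FiniteField.pow_mul_card 3 y, hq]; ring_nf
  set c := ζ ^ (3 ^ (h + 1) - 1)
  have hc0 : c ≠ 0 := pow_ne_zero _ hζ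
  have hcζ : c ^ (3 ^ (h + 1) + 1) = ζ ^ 2 :=
    pow_pred_pow_succ_eq_sq (by positivity) hζ (hfrob ζ)
  have hconj : f (a * ζ ^ 2) ∘ (c * ·) = (c ^ (2 * 3 ^ (h + 1) + 3) * ·) ∘ f a := by
    funext x
    simpa only [Function.comp, hf', ← hcζ] using permCandidate_mul_pow_succ (hfrob c) a x
  rw [← (mulLeft_bijective₀ c hc0).of_comp_iff, hconj]
  exact (mulLeft_bijective₀ _ (pow_ne_zero _ hc0)).comp ha
end

section
/- Let h ≥ 1, q = 3^(2h+1), α = 3^(h+1) (so α > 3), F = GF(q), and let a ∈ F with a ≠ 0. Let f_a = X^(2α+3) + a^α·X^α − a²·X ∈ F[X]. Then f_a is indecomposable: whenever f_a = g ∘ h (composition of polynomials g, h ∈ F[X]), either g has degree 1 or h has degree 1. -/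
/-!
In characteristic 3 the derivative of `f = X^(2α+3) + a^α X^α - a² X` is the nonzero constant
`-a²`. By the chain rule `f' = H' · (g' ∘ H)`, so `g'` and `H'` are constants as well. A polynomial
of degree `n ≥ 2` with constant derivative has `n ≡ 0` in the field, i.e. `3 ∣ n`. Hence if neither
`g` nor `H` is linear, `9` divides `deg f = deg g · deg H = 3 (2 · 3^h + 1)`, which it does not.
-/

open Polynomial

section Derivative

variable {R : Type*} [CommRing R] [IsDomain R]

lemma natDegree_le_one_or_dvd_of_natDegree_derivative_eq_zero (p : ℕ) [CharP R p] {q : R[X]}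
    (hq : (derivative q).natDegree = 0) : q.natDegree ≤ 1 ∨ p ∣ q.natDegree := by
  refine or_iff_not_imp_left.2 fun hdeg => ?_
  obtain ⟨n, hn⟩ : ∃ n, q.natDegree = n + 1 := ⟨q.natDegree - 1, by omega⟩
  have hcoeff : q.leadingCoeff * (q.natDegree : R) = 0 := by
    have := coeff_eq_zero_of_natDegree_lt (p := derivative q) (n := n) (by omega)
    rw [coeff_derivative] at this
    rwa [leadingCoeff, hn, Nat.cast_succ]
  have hq0 : q ≠ 0 := by rintro rfl; simp at hdeg
  rw [← CharP.cast_eq_zero_iff R p]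
  exact (mul_eq_zero.1 hcoeff).resolve_left (leadingCoeff_ne_zero.2 hq0)

lemma natDegree_derivative_eq_zero_of_derivative_comp_eq_C {g H : R[X]} {c : R}
    (hc : c ≠ 0) (hder : derivative (g.comp H) = C c) :
    (derivative g).natDegree = 0 ∧ (derivative H).natDegree = 0 := by
  rw [derivative_comp] at hder
  have hprod_ne : derivative H * (derivative g).comp H ≠ 0 := by
    rw [hder]; exact C_ne_zero.2 hc
  have hH' : derivative H ≠ 0 := left_ne_zero_of_mul hprod_ne
  have hsum : (derivative H).natDegree + ((derivative g).comp H).natDegree = 0 := by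
    rw [← natDegree_mul hH' (right_ne_zero_of_mul hprod_ne), hder, natDegree_C]
  have hHdeg : H.natDegree ≠ 0 := fun h0 => hH' (derivative_of_natDegree_zero h0)
  rw [natDegree_comp] at hsum
  exact ⟨(Nat.mul_eq_zero.1 (by omega)).resolve_right hHdeg, by omega⟩

theorem natDegree_eq_one_or_of_derivative_comp_eq_C (p : ℕ) [CharP R p] {g H : R[X]} {c : R}
    (hc : c ≠ 0) (hder : derivative (g.comp H) = C c) (hdeg : ¬ p * p ∣ (g.comp H).natDegree) :
    g.natDegree = 1 ∨ H.natDegree = 1 := by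
  obtain ⟨hg', hH'⟩ := natDegree_derivative_eq_zero_of_derivative_comp_eq_C hc hder
  rw [natDegree_comp] at hdeg
  have hg0 : g.natDegree ≠ 0 := fun h0 => hdeg (by simp [h0])
  have hH0 : H.natDegree ≠ 0 := fun h0 => hdeg (by simp [h0])
  rcases natDegree_le_one_or_dvd_of_natDegree_derivative_eq_zero p hg' with hg | hg
  · exact Or.inl (by omega)
  rcases natDegree_le_one_or_dvd_of_natDegree_derivative_eq_zero p hH' with hH | hH
  · exact Or.inr (by omega)
  exact (hdeg (mul_dvd_mul hg hH)).elim

end Derivative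

lemma derivative_trinomial_of_charP_three {R : Type*} [CommRing R] [CharP R 3] (k : ℕ) (b c : R) :
    derivative (X ^ (2 * 3 ^ (k + 1) + 3) + C b * X ^ (3 ^ (k + 1)) - C c * X : R[X]) = C (-c) := by
  have hdvd : ∀ n : ℕ, 3 ∣ n → (n : R) = 0 := fun n => (CharP.cast_eq_zero_iff R 3 n).2
  have h1 := hdvd (2 * 3 ^ (k + 1) + 3) (by rw [pow_succ]; omega)
  have h2 := hdvd (3 ^ (k + 1)) (dvd_pow_self 3 k.succ_ne_zero)
  rw [derivative_sub, derivative_add, derivative_X_pow, derivative_C_mul, derivative_X_pow,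
    derivative_C_mul, derivative_X, h1, h2]
  simp

lemma natDegree_trinomial {R : Type*} [CommRing R] [Nontrivial R] (k : ℕ) (b c : R) :
    (X ^ (2 * 3 ^ (k + 1) + 3) + C b * X ^ (3 ^ (k + 1)) - C c * X : R[X]).natDegree =
      2 * 3 ^ (k + 1) + 3 := by
  compute_degree!
  · simp only [if_neg (show ¬(2 * 3 ^ (k + 1) + 3 = 3 ^ (k + 1)) by omega),
      if_neg (show ¬(2 * 3 ^ (k + 1) + 3 = 1) by omega)]
    norm_num
  all_goals omega

lemma not_nine_dvd_two_mul_three_pow_add_three {k : ℕ} (hk : 1 ≤ k) :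
    ¬ 3 * 3 ∣ 2 * 3 ^ (k + 1) + 3 := by
  obtain ⟨m, rfl⟩ : ∃ m, k = m + 1 := ⟨k - 1, by omega⟩
  rw [pow_succ, pow_succ]
  omega

lemma charP_three_of_card_eq {F : Type*} [Field F] [Fintype F] {n : ℕ}
    (hq : Fintype.card F = 3 ^ n) : CharP F 3 := by
  have hcard := FiniteField.cast_card_eq_zero F
  rw [hq, Nat.cast_pow] at hcard
  exact (CharP.charP_iff_prime_eq_zero Nat.prime_three).2 (pow_eq_zero_iff'.1 hcard).1

/-- Indecomposability lemma: for `q = 3^(2h+1)`, `α = 3^(h+1)` with `h ≥ 1`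
(so `α > 3`) and `a ≠ 0`, the polynomial
`f_a = X^(2α+3) + a^α·X^α − a²·X ∈ F[X]` is indecomposable: whenever
`f_a = g ∘ h`, one of `g`, `h` has degree 1. -/
theorem stmt_10 (h : ℕ) (hh : 1 ≤ h) (F : Type*) [Field F] [Fintype F]
    (hq : Fintype.card F = 3 ^ (2 * h + 1)) (a : F) (ha : a ≠ 0) :
    ∀ g H : F[X],
      (X ^ (2 * 3 ^ (h + 1) + 3) + C (a ^ (3 ^ (h + 1))) * X ^ (3 ^ (h + 1))
        - C (a ^ 2) * X) = g.comp H →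
      g.natDegree = 1 ∨ H.natDegree = 1 := by
  intro g H hcomp
  have := charP_three_of_card_eq hq
  have hder := derivative_trinomial_of_charP_three h (a ^ (3 ^ (h + 1))) (a ^ 2)
  have hdeg := natDegree_trinomial h (a ^ (3 ^ (h + 1))) (a ^ 2)
  rw [hcomp] at hder hdeg
  refine natDegree_eq_one_or_of_derivative_comp_eq_C 3 (neg_ne_zero.2 (pow_ne_zero 2 ha)) hder ?_
  rw [hdeg]
  exact not_nine_dvd_two_mul_three_pow_add_three hh
end

section
/- Let h ≥ 0, q = 2^(2h+1), α = 2^(h+1), and F = GF(q). Then the map x ↦ x^(α+1) is a bijection of F; equivalently, X^(α+1) is a permutation polynomial over GF(q). -/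
theorem Nat.Coprime.pow_left_bijective₀ {G₀ : Type*} [GroupWithZero G₀] [Finite G₀] {n : ℕ}
    (hn : n ≠ 0) (hcop : (Nat.card G₀ - 1).Coprime n) : Function.Bijective (· ^ n : G₀ → G₀) := by
  have hunits : Function.Bijective (· ^ n : G₀ˣ → G₀ˣ) :=
    Nat.Coprime.pow_left_bijective (by rwa [Nat.card_units])
  refine Finite.surjective_iff_bijective.mp fun y => ?_
  rcases eq_or_ne y 0 with rfl | hy
  · exact ⟨0, zero_pow hn⟩
  · obtain ⟨u, hu⟩ := hunits.surjective (Units.mk0 y hy)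
    exact ⟨u, by simpa using congr_arg Units.val hu⟩

theorem Nat.coprime_two_pow_odd_sub_one_two_pow_succ_add_one (h : ℕ) :
    (2 ^ (2 * h + 1) - 1).Coprime (2 ^ (h + 1) + 1) := by
  rw [← Nat.isCoprime_iff_coprime]
  -- Bézout: `(2^(h+1) - 1)(2^(h+1) + 1) - 2 (2^(2h+1) - 1) = 1`, since `(2^(h+1))^2 = 2 * 2^(2h+1)`.
  refine ⟨-2, 2 ^ (h + 1) - 1, ?_⟩
  push_cast [Nat.one_le_two_pow]
  ring

/-- With `q = 2^(2h+1)`, `α = 2^(h+1)` and `F = GF(q)`, the map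
`x ↦ x^(α+1)` is a bijection of `F`. -/
theorem stmt_14 (h : ℕ) (F : Type*) [Field F] [Fintype F]
    (hq : Fintype.card F = 2 ^ (2 * h + 1)) :
    Function.Bijective (fun x : F => x ^ (2 ^ (h + 1) + 1)) := by
  refine Nat.Coprime.pow_left_bijective₀ (by positivity) ?_
  rw [Nat.card_eq_fintype_card, hq]
  exact Nat.coprime_two_pow_odd_sub_one_two_pow_succ_add_one h
end

section
/- Let h ≥ 0, q = 2^(2h+1), α = 2^(h+1), and F = GF(q). For every a ∈ F, the map x ↦ x^(α+1) + (ax)^α + a²x is a bijection of F; equivalently, it is a permutation polynomial over GF(q). (Combined with the spread criterion, this gives the existence of the Tits–Lüneburg spread.) -/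
/-!
Write `σ x = x ^ α`. In characteristic 2, `σ` is additive, and `σ (σ x) = x ^ (2q) = x ^ 2`.
Expanding with these two rules, the substitution `x = y + σ a` turns the polynomial into
`y ^ (α + 1) + a ^ (α + 2)`. The power map `y ↦ y ^ (α + 1)` permutes `F` since
`(α + 1)(α - 1) = α² - 1 = 2(q - 1) + 1`, so `y ↦ y ^ (α - 1)` inverts it.
-/

open Function

theorem pow_pow_eq_self_of_mul_eq {K : Type*} [GroupWithZero K] [Fintype K] {m n k : ℕ}
    (hmn : m * n = k * (Fintype.card K - 1) + 1) (x : K) : (x ^ m) ^ n = x := by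
  rw [← pow_mul, hmn]
  rcases eq_or_ne x 0 with rfl | hx
  · exact zero_pow (Nat.succ_ne_zero _)
  · rw [pow_succ, mul_comm k, pow_mul, FiniteField.pow_card_sub_one_eq_one x hx, one_pow,
      one_mul]

theorem pow_bijective_of_mul_eq {K : Type*} [GroupWithZero K] [Fintype K] {m n k : ℕ}
    (hmn : m * n = k * (Fintype.card K - 1) + 1) : Bijective fun x : K => x ^ m :=
  Finite.injective_iff_bijective.mp
    (LeftInverse.injective (g := fun x : K => x ^ n) (pow_pow_eq_self_of_mul_eq hmn))

theorem two_pow_succ_add_one_mul_sub_one (h : ℕ) :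
    (2 ^ (h + 1) + 1) * (2 ^ (h + 1) - 1) = 2 * (2 ^ (2 * h + 1) - 1) + 1 := by
  have hsq : (2 : ℤ) ^ (h + 1) * 2 ^ (h + 1) = 2 * 2 ^ (2 * h + 1) := by ring
  zify [Nat.one_le_two_pow (n := h + 1), Nat.one_le_two_pow (n := 2 * h + 1)]
  linear_combination hsq

def titsLuneburgPoly {R : Type*} [CommRing R] (k : ℕ) (a x : R) : R :=
  x ^ (2 ^ k + 1) + (a * x) ^ 2 ^ k + a ^ 2 * x

theorem titsLuneburgPoly_add_pow {R : Type*} [CommRing R] [CharP R 2] {k : ℕ} {a : R}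
    (ha : (a ^ 2 ^ k) ^ 2 ^ k = a ^ 2) (y : R) :
    titsLuneburgPoly k a (y + a ^ 2 ^ k) = y ^ (2 ^ k + 1) + a ^ (2 ^ k + 2) := by
  have two : (2 : R) = 0 := CharTwo.two_eq_zero
  rw [titsLuneburgPoly, pow_succ, mul_pow, add_pow_char_pow, ha, pow_add]
  linear_combination (y ^ 2 ^ k * a ^ 2 ^ k + a ^ 2 * y + a ^ 2 * a ^ 2 ^ k) * two

/-- Tits–Lüneburg permutation polynomials: with `q = 2^(2h+1)`,
`α = 2^(h+1)` and `F = GF(q)`, the map `x ↦ x^(α+1) + (ax)^α + a²x` is a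
bijection of `F` for every `a ∈ F`. -/
theorem stmt_15 (h : ℕ) (F : Type*) [Field F] [Fintype F]
    (hq : Fintype.card F = 2 ^ (2 * h + 1)) (a : F) :
    Function.Bijective (fun x : F =>
      x ^ (2 ^ (h + 1) + 1) + (a * x) ^ (2 ^ (h + 1)) + a ^ 2 * x) := by
  have := charP_of_card_eq_prime_pow (p := 2) hq
  have hσ : (a ^ 2 ^ (h + 1)) ^ 2 ^ (h + 1) = a ^ 2 := by
    rw [← pow_mul, ← pow_add, show h + 1 + (h + 1) = 2 * h + 1 + 1 by ring, pow_succ, pow_mul,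
      ← hq, FiniteField.pow_card]
  have hf : titsLuneburgPoly (h + 1) a =
      (fun y => y ^ (2 ^ (h + 1) + 1) + a ^ (2 ^ (h + 1) + 2)) ∘ fun x => x - a ^ 2 ^ (h + 1) :=
    funext fun x => by rw [comp_apply, ← titsLuneburgPoly_add_pow hσ, sub_add_cancel]
  change Bijective (titsLuneburgPoly (h + 1) a)
  rw [hf]
  exact ((Equiv.addRight _).bijective.comp
    (pow_bijective_of_mul_eq (hq ▸ two_pow_succ_add_one_mul_sub_one h))).comp
    (Equiv.subRight _).bijective
end

section
/- Let q be an odd prime power, F = GF(q), and h₁ : F → F a function such that the map x ↦ h₁(x) + a²x is injective for every a ∈ F. Then for all distinct x, y ∈ F there are no z₁, z₂ ∈ F, not both zero, satisfying (h₁(x) − h₁(y))·z₁² + (x − y)·z₂² = 0; equivalently, −(h₁(x) − h₁(y))/(x − y) is a nonsquare in F for all x ≠ y. -/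
lemma add_div_sq_mul_eq_of_mul_sq_add_mul_sq_eq_zero {F : Type*} [Field F] (h : F → F)
    {x y z₁ z₂ : F} (hz₁ : z₁ ≠ 0) (heq : (h x - h y) * z₁ ^ 2 + (x - y) * z₂ ^ 2 = 0) :
    h x + (z₂ / z₁) ^ 2 * x = h y + (z₂ / z₁) ^ 2 * y := by
  field_simp
  linear_combination heq

theorem stmt_17_general (F : Type*) [Field F]
    (h₁ : F → F)
    (hinj : ∀ a : F, Function.Injective (fun x : F => h₁ x + a ^ 2 * x)) :
    ∀ x y : F, x ≠ y →
      ¬ ∃ z₁ z₂ : F, (z₁ ≠ 0 ∨ z₂ ≠ 0) ∧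
        (h₁ x - h₁ y) * z₁ ^ 2 + (x - y) * z₂ ^ 2 = 0 := by
  rintro x y hxy ⟨z₁, z₂, hz, heq⟩
  by_cases hz₁ : z₁ = 0
  · subst hz₁
    have hz₂ : z₂ = 0 := by simpa [sub_ne_zero.mpr hxy] using heq
    exact hz.elim (· rfl) (· hz₂)
  · exact hxy (hinj (z₂ / z₁) (add_div_sq_mul_eq_of_mul_sq_add_mul_sq_eq_zero h₁ hz₁ heq))

/-- Let `q` be odd and `h₁ : F → F` be such that `x ↦ h₁(x) + a²x` is
injective for every `a`. Then for distinct `x, y` there are no `z₁, z₂`, not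
both zero, with `(h₁(x) − h₁(y))·z₁² + (x − y)·z₂² = 0`. -/
theorem stmt_17 (F : Type*) [Field F] [Fintype F] (hq : Odd (Fintype.card F))
    (h₁ : F → F)
    (hinj : ∀ a : F, Function.Injective (fun x : F => h₁ x + a ^ 2 * x)) :
    ∀ x y : F, x ≠ y →
      ¬ ∃ z₁ z₂ : F, (z₁ ≠ 0 ∨ z₂ ≠ 0) ∧
        (h₁ x - h₁ y) * z₁ ^ 2 + (x - y) * z₂ ^ 2 = 0 :=
  stmt_17_general F h₁ hinj
end

section
/- Let F = GF(q) be a finite field, let Δ be a positive divisor of q − 1, let d, t be positive integers, let h₁ : F → F be any function and h₂ : F → F an additive function, and for a ∈ F set f_a(x) = h₁(x) + h₂(ax) + a²x. Suppose the family {f_a : a ∈ F} is of class Δ, i.e. f_a(bx) = b^t · f_{a·b^d}(x) for every b ∈ F with b^((q−1)/Δ) = 1 and all a, x ∈ F. Let ε be a generator of the multiplicative group F*. Then f_a is a bijection of F for every a ∈ F if and only if f_0 is a bijection and f_{ε^r} is a bijection for every r with 0 ≤ r < gcd(q − 1, Δ·d). -/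
/-!
If `b ≠ 0` satisfies `b ^ ((q - 1) / Δ) = 1`, the class-`Δ` identity says that `f_a` and
`f_{a b^d}` differ by bijective scalings on both sides, so one is a bijection iff the other is.
Taking `b = ε ^ (Δ j)` shows that bijectivity of `f_{ε^m}` depends only on `m` modulo the
subgroup of `ℤ/(q-1)` generated by `Δ d`, which is generated by `gcd (q - 1) (Δ d)`; hence the
residues `0 ≤ r < gcd (q - 1) (Δ d)` suffice.
-/

theorem Nat.exists_mul_modEq_gcd {N : ℕ} (hN : 0 < N) (D : ℕ) :
    ∃ k, D * k ≡ Nat.gcd N D [MOD N] := by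
  rcases (Nat.gcd_le_left D hN).lt_or_eq with hlt | heq
  · obtain ⟨k, -, hk⟩ := Nat.exists_mul_mod_eq_gcd (Nat.gcd_comm N D ▸ hlt)
    refine ⟨k, ?_⟩
    rw [Nat.ModEq, hk, Nat.gcd_comm, Nat.mod_eq_of_lt hlt]
  · refine ⟨0, ?_⟩
    rw [heq, mul_zero]
    exact (Nat.modEq_zero_iff_dvd.mpr dvd_rfl).symm

theorem Nat.exists_mod_gcd_add_mul_modEq {N : ℕ} (hN : 0 < N) (n D : ℕ) :
    ∃ j, n % Nat.gcd N D + D * j ≡ n [MOD N] := by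
  obtain ⟨k, hk⟩ := Nat.exists_mul_modEq_gcd hN D
  refine ⟨k * (n / Nat.gcd N D), ?_⟩
  calc n % Nat.gcd N D + D * (k * (n / Nat.gcd N D))
      = n % Nat.gcd N D + D * k * (n / Nat.gcd N D) := by rw [mul_assoc]
    _ ≡ n % Nat.gcd N D + Nat.gcd N D * (n / Nat.gcd N D) [MOD N] :=
        (hk.mul_right _).add_left _
    _ = n := Nat.mod_add_div n _

theorem bijective_iff_of_apply_mul_eq_pow_mul {G : Type*} [GroupWithZero G] {g g' : G → G}
    {b : G} (t : ℕ) (hb : b ≠ 0) (h : ∀ x, g (b * x) = b ^ t * g' x) :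
    Function.Bijective g ↔ Function.Bijective g' := by
  have hcomp : g ∘ (b * ·) = (b ^ t * ·) ∘ g' := funext h
  rw [← Function.Bijective.of_comp_iff g (mulLeft_bijective₀ b hb), hcomp,
    Function.Bijective.of_comp_iff' (mulLeft_bijective₀ _ (pow_ne_zero t hb))]

theorem bijective_pow_iff_bijective_pow_add_mul {G : Type*} [GroupWithZero G] {f : G → G → G}
    {N Δ d t : ℕ} (hΔ : Δ ∣ N)
    (hclass : ∀ b : G, b ^ (N / Δ) = 1 → ∀ a x : G, f a (b * x) = b ^ t * f (a * b ^ d) x)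
    {ε : G} (hε0 : ε ≠ 0) (hεN : ε ^ N = 1) (m j : ℕ) :
    Function.Bijective (f (ε ^ m)) ↔ Function.Bijective (f (ε ^ (m + Δ * d * j))) := by
  have hb : (ε ^ (Δ * j)) ^ (N / Δ) = 1 := by
    rw [← pow_mul, mul_right_comm, Nat.mul_div_cancel' hΔ, pow_mul, hεN, one_pow]
  have hexp : ε ^ m * (ε ^ (Δ * j)) ^ d = ε ^ (m + Δ * d * j) := by
    rw [← pow_mul, ← pow_add, mul_right_comm]
  exact hexp ▸ bijective_iff_of_apply_mul_eq_pow_mul t (pow_ne_zero _ hε0) (hclass _ hb _)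

theorem stmt_18_general (F : Type*) [Field F] [Fintype F]
    (q : ℕ) (hq : Fintype.card F = q)
    (Δ d t : ℕ) (hΔdvd : Δ ∣ q - 1)
    (f : F → F → F)
    (hclass : ∀ b : F, b ^ ((q - 1) / Δ) = 1 →
      ∀ a x : F, f a (b * x) = b ^ t * f (a * b ^ d) x)
    (ε : F) (hε : ∀ z : F, z ≠ 0 → ∃ n : ℕ, z = ε ^ n) :
    (∀ a : F, Function.Bijective (f a)) ↔
      (Function.Bijective (f 0) ∧
        ∀ r : ℕ, r < Nat.gcd (q - 1) (Δ * d) →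
          Function.Bijective (f (ε ^ r))) := by
  refine ⟨fun h => ⟨h 0, fun r _ => h _⟩, fun ⟨h0, hr⟩ a => ?_⟩
  rcases eq_or_ne a 0 with rfl | ha
  · exact h0
  obtain ⟨n, rfl⟩ := hε a ha
  have hN : 0 < q - 1 := by
    have := Fintype.one_lt_card (α := F)
    omega
  have hg : 0 < Nat.gcd (q - 1) (Δ * d) := Nat.gcd_pos_of_pos_left _ hN
  -- `hε` does not force `ε ≠ 0`: over `GF(2)`, `ε = 0` works since `0 ^ 0 = 1`.
  rcases Nat.eq_zero_or_pos n with rfl | hn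
  · exact hr 0 hg
  have hε0 : ε ≠ 0 := ne_zero_pow hn.ne' ha
  have hεN : ε ^ (q - 1) = 1 := hq ▸ FiniteField.pow_card_sub_one_eq_one ε hε0
  obtain ⟨j, hj⟩ := Nat.exists_mod_gcd_add_mul_modEq hN n (Δ * d)
  rw [pow_eq_pow_mod n hεN, ← hj, ← pow_eq_pow_mod _ hεN,
    ← bijective_pow_iff_bijective_pow_add_mul hΔdvd hclass hε0 hεN]
  exact hr _ (Nat.mod_lt _ hg)

/-- Class-Δ reduction: let `F = GF(q)`, `Δ ∣ q − 1`, `h₂` additive, and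
`f_a(x) = h₁(x) + h₂(ax) + a²x`. Suppose the family `{f_a}` is of class `Δ`,
i.e. `f_a(bx) = b^t · f_{a·b^d}(x)` whenever `b^((q−1)/Δ) = 1`, and let `ε`
generate `F*`. Then every `f_a` is a bijection iff `f_0` is a bijection and
`f_{ε^r}` is a bijection for every `0 ≤ r < gcd(q − 1, Δ·d)`. -/
theorem stmt_18 (F : Type*) [Field F] [Fintype F]
    (q : ℕ) (hq : Fintype.card F = q)
    (Δ d t : ℕ) (hΔ : 0 < Δ) (hΔdvd : Δ ∣ q - 1) (hd : 0 < d) (ht : 0 < t)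
    (h₁ h₂ : F → F) (hadd : ∀ x u : F, h₂ (x + u) = h₂ x + h₂ u)
    (f : F → F → F)
    (hf : ∀ a x : F, f a x = h₁ x + h₂ (a * x) + a ^ 2 * x)
    (hclass : ∀ b : F, b ^ ((q - 1) / Δ) = 1 →
      ∀ a x : F, f a (b * x) = b ^ t * f (a * b ^ d) x)
    (ε : F) (hε : ∀ z : F, z ≠ 0 → ∃ n : ℕ, z = ε ^ n) :
    (∀ a : F, Function.Bijective (f a)) ↔
      (Function.Bijective (f 0) ∧
        ∀ r : ℕ, r < Nat.gcd (q - 1) (Δ * d) →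
          Function.Bijective (f (ε ^ r))) :=
  stmt_18_general F q hq Δ d t hΔdvd f hclass ε hε
end
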